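/- arXiv:2405.14532 — 3 statements merged into one kernel-verified Lean document; each statement's English description precedes it below -/
import Mathlib

section
/- Let d ≥ 1, let Q, Q' ∈ O(d) be orthogonal matrices, and let δ > 0 satisfy δ ≤ ‖Q' − Q‖_F² / (12 d). If u is a random vector uniformly distributed on the unit sphere S^{d−1} ⊆ ℝ^d, then the probability that the cones C(Q'u, δ) and C(Qu, δ) intersect only at the origin (i.e., C(Q'u,δ) ∩ C(Qu,δ) ⊆ {0}) is at least δ. -/
/-!
If `u` is uniform on the sphere, invariance under coordinate permutations and sign changes
gives `E[u i * u j] = 1 / d` for `i = j` and `0` otherwise, hence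
`E ‖(Q' - Q) u‖² = ‖Q' - Q‖_F² / d ≥ 12 δ`. As `‖Q'u - Qu‖² ≤ 4`, a reverse Markov bound shows
`‖Q'u - Qu‖² > 8 δ` with probability at least `δ`. Finally, cones around unit vectors `a, b`
with `‖a - b‖² > 8 δ` meet only at `0`: a nonzero `v` in both gives
`2 (1 - δ) ‖v‖ ≤ ⟪a + b, v⟫ ≤ ‖a + b‖ ‖v‖`, which contradicts `‖a + b‖² = 4 - ‖a - b‖² < 4 - 8 δ`.
-/

open MeasureTheory Matrix

namespace PW

noncomputable def sqnorm {d : ℕ} (v : Fin d → ℝ) : ℝ := ∑ j, v j ^ 2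

noncomputable def vnorm {d : ℕ} (v : Fin d → ℝ) : ℝ := Real.sqrt (sqnorm v)

/-- The cone of angle `δ` and direction `u`. -/
noncomputable def cone {d : ℕ} (u : Fin d → ℝ) (δ : ℝ) : Set (Fin d → ℝ) :=
  {v | (1 - δ) * vnorm v ≤ ∑ j, u j * v j}

/-- `ν` is the uniform probability measure on the unit sphere of `ℝ^d`: a probability
measure concentrated on the unit sphere and invariant under every orthogonal map. -/
def IsUniformOnSphere {d : ℕ} (ν : Measure (Fin d → ℝ)) : Prop :=
  IsProbabilityMeasure ν ∧ ν {v | sqnorm v = 1} = 1 ∧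
    ∀ Q ∈ Matrix.orthogonalGroup (Fin d) ℝ, Measure.map (fun v => Q.mulVec v) ν = ν

open scoped RealInnerProductSpace

theorem eq_zero_of_mem_inter_cones {E : Type*} [NormedAddCommGroup E] [InnerProductSpace ℝ E]
    {a b v : E} {δ : ℝ} (ha : ‖a‖ = 1) (hb : ‖b‖ = 1) (hab : 8 * δ < ‖a - b‖ ^ 2)
    (hva : (1 - δ) * ‖v‖ ≤ ⟪a, v⟫) (hvb : (1 - δ) * ‖v‖ ≤ ⟪b, v⟫) : v = 0 := by
  by_contra hv
  have hv_pos : 0 < ‖v‖ := norm_pos_iff.mpr hv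
  have hsum : 2 * (1 - δ) ≤ ‖a + b‖ := by
    refine le_of_mul_le_mul_right ?_ hv_pos
    calc 2 * (1 - δ) * ‖v‖ ≤ ⟪a + b, v⟫ := by rw [inner_add_left]; linarith
      _ ≤ ‖a + b‖ * ‖v‖ := real_inner_le_norm _ _
  have hpar : ‖a + b‖ ^ 2 + ‖a - b‖ ^ 2 = 4 := by
    rw [norm_add_sq_real, norm_sub_sq_real, ha, hb]; ring
  have hδ : δ < 1 := by nlinarith [norm_nonneg (a + b)]
  nlinarith [norm_nonneg (a + b)]

section OrthogonalGroup

variable {n R : Type*} [Fintype n] [DecidableEq n] [CommRing R]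

lemma permMatrix_mem_orthogonalGroup (σ : Equiv.Perm n) :
    σ.permMatrix R ∈ orthogonalGroup n R := by
  rw [mem_orthogonalGroup_iff, transpose_permMatrix, ← permMatrix_mul, inv_mul_cancel,
    permMatrix_one]

lemma diagonal_mem_orthogonalGroup {s : n → R} (hs : ∀ k, s k * s k = 1) :
    diagonal s ∈ orthogonalGroup n R := by
  rw [mem_orthogonalGroup_iff, diagonal_transpose, diagonal_mul_diagonal, ← diagonal_one]
  exact congrArg diagonal (funext hs)

lemma dotProduct_mulVec_mulVec_of_mem_orthogonalGroup {Q : Matrix n n R}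
    (hQ : Q ∈ orthogonalGroup n R) (u v : n → R) : Q *ᵥ u ⬝ᵥ Q *ᵥ v = u ⬝ᵥ v := by
  rw [dotProduct_mulVec, ← mulVec_transpose, mulVec_mulVec, (mem_orthogonalGroup_iff' n R).mp hQ,
    one_mulVec]

end OrthogonalGroup

theorem integral_le_mul_measureReal_lt_add {α : Type*} [MeasurableSpace α] {μ : Measure α}
    [IsProbabilityMeasure μ] {f : α → ℝ} {M t : ℝ} (hf : Integrable f μ) (hfm : Measurable f)
    (hM : ∀ᵐ x ∂μ, f x ≤ M) (ht : 0 ≤ t) :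
    ∫ x, f x ∂μ ≤ M * μ.real {x | t < f x} + t := by
  set A := {x | t < f x}
  have hA : MeasurableSet A := measurableSet_lt measurable_const hfm
  have hbound : ∀ᵐ x ∂μ, f x ≤ A.indicator (fun _ => M) x + t := by
    filter_upwards [hM] with x hx
    by_cases hxA : x ∈ A
    · rw [Set.indicator_of_mem hxA]; linarith
    · rw [Set.indicator_of_notMem hxA]; exact (not_lt.mp hxA).trans (by linarith)
  calc ∫ x, f x ∂μ ≤ ∫ x, (A.indicator (fun _ => M) x + t) ∂μ :=
        integral_mono_ae hf (((integrable_const M).indicator hA).add (integrable_const t)) hbound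
    _ = M * μ.real A + t := by
        rw [integral_add ((integrable_const M).indicator hA) (integrable_const t),
          integral_indicator_const _ hA, integral_const, probReal_univ, smul_eq_mul, smul_eq_mul,
          mul_comm, one_mul]

section

variable {d : ℕ}

lemma sqnorm_eq_norm_sq (v : Fin d → ℝ) :
    sqnorm v = ‖(WithLp.toLp 2 v : EuclideanSpace ℝ (Fin d))‖ ^ 2 := by
  rw [EuclideanSpace.real_norm_sq_eq]; rfl

lemma vnorm_eq_norm (v : Fin d → ℝ) :
    vnorm v = ‖(WithLp.toLp 2 v : EuclideanSpace ℝ (Fin d))‖ := by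
  rw [vnorm, sqnorm_eq_norm_sq, Real.sqrt_sq (norm_nonneg _)]

lemma sum_mul_eq_inner (u v : Fin d → ℝ) :
    ∑ j, u j * v j = ⟪(WithLp.toLp 2 u : EuclideanSpace ℝ (Fin d)), WithLp.toLp 2 v⟫ := by
  simp [PiLp.inner_apply, mul_comm]

lemma norm_toLp_eq_one {a : Fin d → ℝ} (ha : sqnorm a = 1) :
    ‖(WithLp.toLp 2 a : EuclideanSpace ℝ (Fin d))‖ = 1 := by
  rwa [sqnorm_eq_norm_sq, pow_eq_one_iff_of_nonneg (norm_nonneg _) two_ne_zero] at ha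

theorem cone_inter_cone_subset_zero {a b : Fin d → ℝ} {δ : ℝ} (ha : sqnorm a = 1)
    (hb : sqnorm b = 1) (hab : 8 * δ < sqnorm (a - b)) : cone a δ ∩ cone b δ ⊆ {0} := by
  rintro v ⟨hva, hvb⟩
  rw [sqnorm_eq_norm_sq, WithLp.toLp_sub] at hab
  simp only [cone, Set.mem_ofPred_eq, vnorm_eq_norm, sum_mul_eq_inner] at hva hvb
  simpa using eq_zero_of_mem_inter_cones (norm_toLp_eq_one ha) (norm_toLp_eq_one hb) hab hva hvb

lemma sqnorm_sub_le_four {a b : Fin d → ℝ} (ha : sqnorm a = 1) (hb : sqnorm b = 1) :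
    sqnorm (a - b) ≤ 4 := by
  have h := (norm_sub_le _ _).trans_eq
    (congrArg₂ (· + ·) (norm_toLp_eq_one ha) (norm_toLp_eq_one hb))
  rw [sqnorm_eq_norm_sq, WithLp.toLp_sub]
  nlinarith [norm_nonneg (WithLp.toLp 2 a - WithLp.toLp 2 b : EuclideanSpace ℝ (Fin d))]

lemma sqnorm_eq_dotProduct (v : Fin d → ℝ) : sqnorm v = v ⬝ᵥ v := by
  simp only [sqnorm, dotProduct, sq]

lemma sqnorm_mulVec_of_mem_orthogonalGroup {Q : Matrix (Fin d) (Fin d) ℝ}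
    (hQ : Q ∈ orthogonalGroup (Fin d) ℝ) (v : Fin d → ℝ) : sqnorm (Q *ᵥ v) = sqnorm v := by
  rw [sqnorm_eq_dotProduct, sqnorm_eq_dotProduct,
    dotProduct_mulVec_mulVec_of_mem_orthogonalGroup hQ]

lemma continuous_sqnorm : Continuous (sqnorm (d := d)) := by
  unfold sqnorm; fun_prop

lemma isCompact_sphere : IsCompact {v : Fin d → ℝ | sqnorm v = 1} := by
  refine Metric.isCompact_of_isClosed_isBounded
    (isClosed_eq continuous_sqnorm continuous_const) ?_
  refine (Metric.isBounded_closedBall (x := 0) (r := 1)).subset fun v hv => ?_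
  rw [mem_closedBall_zero_iff, pi_norm_le_iff_of_nonneg zero_le_one]
  intro j
  have hv : sqnorm v = 1 := hv
  rw [Real.norm_eq_abs, ← sq_le_one_iff_abs_le_one, ← hv]
  exact Finset.single_le_sum (f := fun k => v k ^ 2) (fun k _ => sq_nonneg _) (Finset.mem_univ j)

namespace IsUniformOnSphere

variable {ν : Measure (Fin d → ℝ)} (hν : IsUniformOnSphere ν)
include hν

lemma ae_sqnorm_eq_one : ∀ᵐ v ∂ν, sqnorm v = 1 := by
  have := hν.1
  exact (ae_iff_measure_eq isCompact_sphere.isClosed.measurableSet.nullMeasurableSet).mpr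
    (by rw [hν.2.1, measure_univ])

lemma integrable_of_continuous {f : (Fin d → ℝ) → ℝ} (hf : Continuous f) : Integrable f ν := by
  have := hν.1
  obtain ⟨C, hC⟩ := isCompact_sphere.exists_bound_of_continuousOn hf.continuousOn
  refine Integrable.mono' (integrable_const C) hf.aestronglyMeasurable ?_
  filter_upwards [hν.ae_sqnorm_eq_one] with v hv using hC v hv

lemma integral_comp_mulVec {Q : Matrix (Fin d) (Fin d) ℝ} (hQ : Q ∈ orthogonalGroup (Fin d) ℝ)
    {f : (Fin d → ℝ) → ℝ} (hf : AEStronglyMeasurable f ν) :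
    ∫ v, f (Q *ᵥ v) ∂ν = ∫ v, f v ∂ν := by
  have hmap := hν.2.2 Q hQ
  rw [← integral_map (by fun_prop) (by rwa [hmap]), hmap]

lemma integral_sq_apply (i : Fin d) : ∫ v, v i ^ 2 ∂ν = (d : ℝ)⁻¹ := by
  have := hν.1
  have hswap (k : Fin d) : ∫ v, v k ^ 2 ∂ν = ∫ v, v i ^ 2 ∂ν := by
    simpa [permMatrix_mulVec] using hν.integral_comp_mulVec
      (permMatrix_mem_orthogonalGroup (Equiv.swap k i)) (f := fun v => v i ^ 2)
      ((continuous_apply i).pow 2).aestronglyMeasurable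
  have hsum : ∑ k, ∫ v, v k ^ 2 ∂ν = 1 := by
    have hsphere : ∀ᵐ v ∂ν, ∑ k, v k ^ 2 = 1 := hν.ae_sqnorm_eq_one
    rw [← integral_finsetSum _ fun k _ => hν.integrable_of_continuous (by fun_prop),
      integral_congr_ae hsphere, integral_const, probReal_univ, one_smul]
  simp only [hswap, Finset.sum_const, Finset.card_univ, Fintype.card_fin, nsmul_eq_mul] at hsum
  exact eq_inv_of_mul_eq_one_right hsum

lemma integral_mul_apply_of_ne {i j : Fin d} (hij : i ≠ j) : ∫ v, v i * v j ∂ν = 0 := by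
  have hflip := hν.integral_comp_mulVec
    (diagonal_mem_orthogonalGroup (s := Function.update 1 i (-1)) fun k => by
      rcases eq_or_ne k i with rfl | hk <;> simp [*])
    (f := fun v => v i * v j) (by fun_prop)
  simp only [mulVec_diagonal, Function.update_self, Function.update_of_ne hij.symm,
    Pi.one_apply, one_mul, neg_mul, integral_neg] at hflip
  linarith

lemma integral_mul_apply (i j : Fin d) :
    ∫ v, v i * v j ∂ν = if i = j then (d : ℝ)⁻¹ else 0 := by
  split_ifs with hij
  · simp_rw [hij, ← sq]
    exact hν.integral_sq_apply j
  · exact hν.integral_mul_apply_of_ne hij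

lemma integral_dotProduct_sq (w : Fin d → ℝ) : ∫ v, (w ⬝ᵥ v) ^ 2 ∂ν = sqnorm w / d := by
  have hexpand (v : Fin d → ℝ) : (w ⬝ᵥ v) ^ 2 = ∑ k, ∑ l, w k * w l * (v k * v l) := by
    rw [sq, dotProduct, Finset.sum_mul_sum]
    exact Finset.sum_congr rfl fun k _ => Finset.sum_congr rfl fun l _ => by ring
  have hint (k l : Fin d) : Integrable (fun v => w k * w l * (v k * v l)) ν :=
    hν.integrable_of_continuous (by fun_prop)
  simp_rw [hexpand]
  rw [integral_finsetSum _ fun k _ => integrable_finsetSum _ fun l _ => hint k l]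
  simp_rw [integral_finsetSum _ fun l _ => hint _ l, integral_const_mul, hν.integral_mul_apply,
    mul_ite, mul_zero, Finset.sum_ite_eq, Finset.mem_univ, if_true, sqnorm, Finset.sum_div]
  exact Finset.sum_congr rfl fun k _ => by ring

lemma integral_sqnorm_mulVec (M : Matrix (Fin d) (Fin d) ℝ) :
    ∫ v, sqnorm (M *ᵥ v) ∂ν = (∑ i, ∑ j, M i j ^ 2) / d := by
  simp_rw [sqnorm, mulVec]
  rw [integral_finsetSum _ fun i _ => hν.integrable_of_continuous (by fun_prop), Finset.sum_div]
  exact Finset.sum_congr rfl fun i _ => hν.integral_dotProduct_sq (M i)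

end IsUniformOnSphere

end

/-- if `Q, Q'` are orthogonal and `δ ≤ ‖Q' − Q‖_F²/(12 d)`, then for `u`
uniform on the unit sphere, the cones `C(Q'u,δ)` and `C(Qu,δ)` intersect only at the
origin with probability at least `δ`. -/
theorem cones_disjoint_probability (d : ℕ) (hd : 1 ≤ d)
    (Q Q' : Matrix (Fin d) (Fin d) ℝ)
    (hQ : Q ∈ Matrix.orthogonalGroup (Fin d) ℝ) (hQ' : Q' ∈ Matrix.orthogonalGroup (Fin d) ℝ)
    (δ : ℝ) (hδpos : 0 < δ)
    (hδ : δ ≤ (∑ i, ∑ j, (Q' i j - Q i j) ^ 2) / (12 * d))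
    (ν : Measure (Fin d → ℝ)) (hν : IsUniformOnSphere ν) :
    ENNReal.ofReal δ
      ≤ ν {u | cone (Q'.mulVec u) δ ∩ cone (Q.mulVec u) δ ⊆ {0}} := by
  have := hν.1
  set X : (Fin d → ℝ) → ℝ := fun u => sqnorm ((Q' - Q) *ᵥ u)
  have hX : Continuous X := continuous_sqnorm.comp (by fun_prop)
  have hunit : ∀ᵐ u ∂ν, sqnorm (Q' *ᵥ u) = 1 ∧ sqnorm (Q *ᵥ u) = 1 := by
    filter_upwards [hν.ae_sqnorm_eq_one] with u hu
    simp only [sqnorm_mulVec_of_mem_orthogonalGroup hQ, sqnorm_mulVec_of_mem_orthogonalGroup hQ',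
      hu, and_self]
  have hmean : 12 * δ ≤ ∫ u, X u ∂ν := by
    have hd_pos : (0 : ℝ) < d := by exact_mod_cast hd
    rw [hν.integral_sqnorm_mulVec, le_div_iff₀ hd_pos]
    rw [le_div_iff₀ (by positivity)] at hδ
    simp only [Matrix.sub_apply]
    linarith
  have hX_le : ∀ᵐ u ∂ν, X u ≤ 4 := hunit.mono fun u hu => by
    simpa only [X, sub_mulVec] using sqnorm_sub_le_four hu.1 hu.2
  have hmarkov := integral_le_mul_measureReal_lt_add (hν.integrable_of_continuous hX)
    hX.measurable hX_le (by positivity : 0 ≤ 8 * δ)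
  calc ENNReal.ofReal δ ≤ ν {u | 8 * δ < X u} := by
        rw [ENNReal.ofReal_le_iff_le_toReal (measure_ne_top _ _), ← measureReal_def]
        linarith
    _ ≤ _ := measure_mono_ae <| hunit.mono fun u hu (hXu : 8 * δ < X u) =>
        cone_inter_cone_subset_zero hu.1 hu.2 (by simpa only [X, sub_mulVec] using hXu)

end PW
end

section
/- Let d ≥ 1, let u ∈ ℝ^d be a unit vector, δ ∈ (0,1), σ ≥ 0, Q* ∈ O(d) an orthogonal matrix, and let x, z ∈ ℝ^d with x ≠ 0. Set y = Q* x + σ z. If y ∈ C(u, δ), then x ∈ C((Q*)ᵀ u, δ + 2σ‖z‖/‖x‖). -/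
open MeasureTheory ProbabilityTheory Matrix

namespace PW

lemma vnorm_eq {d : ℕ} (v : Fin d → ℝ) :
    vnorm v = ‖(WithLp.equiv 2 (Fin d → ℝ)).symm v‖ := by
  simp [vnorm, sqnorm, EuclideanSpace.norm_eq, Real.norm_eq_abs, sq_abs]

lemma sqnorm_nonneg {d : ℕ} (v : Fin d → ℝ) : 0 ≤ sqnorm v :=
  Finset.sum_nonneg fun j _ => sq_nonneg _

lemma vnorm_nonneg {d : ℕ} (v : Fin d → ℝ) : 0 ≤ vnorm v := Real.sqrt_nonneg _

lemma vnorm_add_le {d : ℕ} (a b : Fin d → ℝ) : vnorm (a + b) ≤ vnorm a + vnorm b := by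
  rw [vnorm_eq, vnorm_eq, vnorm_eq]
  exact norm_add_le ((WithLp.equiv 2 (Fin d → ℝ)).symm a) ((WithLp.equiv 2 (Fin d → ℝ)).symm b)

lemma vnorm_smul {d : ℕ} (σ : ℝ) (hσ : 0 ≤ σ) (z : Fin d → ℝ) :
    vnorm (σ • z) = σ * vnorm z := by
  rw [vnorm_eq, vnorm_eq]
  have : (WithLp.equiv 2 (Fin d → ℝ)).symm (σ • z)
      = σ • (WithLp.equiv 2 (Fin d → ℝ)).symm z := rfl
  rw [this, norm_smul, Real.norm_eq_abs, abs_of_nonneg hσ]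

/-- if `y = Q* x + σ z` lies in the cone of angle `δ` around the unit vector
`u`, then `x` lies in the cone of angle `δ + 2σ‖z‖/‖x‖` around `(Q*)ᵀ u`. -/
theorem cone_transfer (d : ℕ) (hd : 1 ≤ d) (u : Fin d → ℝ) (hu : sqnorm u = 1)
    (δ : ℝ) (hδ : δ ∈ Set.Ioo (0 : ℝ) 1) (σ : ℝ) (hσ : 0 ≤ σ)
    (Qstar : Matrix (Fin d) (Fin d) ℝ) (hQstar : Qstar ∈ Matrix.orthogonalGroup (Fin d) ℝ)
    (x z y : Fin d → ℝ) (hx : x ≠ 0)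
    (hy : y = Qstar.mulVec x + σ • z)
    (hyc : y ∈ cone u δ) :
    x ∈ cone (Qstarᵀ.mulVec u) (δ + 2 * σ * vnorm z / vnorm x) := by
  obtain ⟨hδ0, hδ1⟩ := hδ
  have hvz : 0 ≤ vnorm z := vnorm_nonneg z
  -- x has positive norm
  have hx0 : 0 < vnorm x := by
    obtain ⟨j, hj⟩ := Function.ne_iff.mp hx
    have hj' : x j ≠ 0 := hj
    have : (0:ℝ) < sqnorm x := by
      have h1 : x j ^ 2 ≤ sqnorm x :=
        Finset.single_le_sum (fun i _ => sq_nonneg (x i)) (Finset.mem_univ j)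
      have h2 : 0 < x j ^ 2 := by positivity
      linarith
    exact Real.sqrt_pos.mpr this
  -- orthogonality : Qᵀ Q = 1
  have hQ' : Qstarᵀ * Qstar = 1 := by
    have := (Matrix.mem_orthogonalGroup_iff' (Fin d) ℝ).mp hQstar
    simpa [Matrix.star_eq_conjTranspose] using this
  -- norm preservation
  have hQnorm : vnorm (Qstar.mulVec x) = vnorm x := by
    unfold vnorm
    congr 1
    have hdp : (Qstar.mulVec x) ⬝ᵥ (Qstar.mulVec x) = x ⬝ᵥ x := by
      rw [Matrix.dotProduct_mulVec, ← Matrix.mulVec_transpose, Matrix.mulVec_mulVec, hQ',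
        Matrix.one_mulVec]
    simpa [sqnorm, dotProduct, sq] using hdp
  -- inner product transfer
  have hdot : ∑ j, u j * y j
      = (∑ j, (Qstarᵀ.mulVec u) j * x j) + σ * ∑ j, u j * z j := by
    subst hy
    simp only [Pi.add_apply, Pi.smul_apply, smul_eq_mul, mul_add, Finset.sum_add_distrib]
    congr 1
    · simp only [Matrix.mulVec, dotProduct, Matrix.transpose_apply, Finset.mul_sum,
        Finset.sum_mul]
      rw [Finset.sum_comm]
      refine Finset.sum_congr rfl fun k _ => Finset.sum_congr rfl fun j _ => by ring
    · rw [Finset.mul_sum]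
      refine Finset.sum_congr rfl fun j _ => by ring
  -- Cauchy-Schwarz : ∑ u z ≤ vnorm z
  have hCS : ∑ j, u j * z j ≤ vnorm z := by
    have h := Real.sum_mul_le_sqrt_mul_sqrt (Finset.univ) u z
    have hvu : Real.sqrt (∑ j, u j ^ 2) = 1 := by
      rw [show (∑ j, u j ^ 2) = sqnorm u from rfl, hu, Real.sqrt_one]
    calc ∑ j, u j * z j ≤ Real.sqrt (∑ j, u j ^ 2) * Real.sqrt (∑ j, z j ^ 2) := h
      _ = vnorm z := by rw [hvu, one_mul]; rfl
  -- triangle : vnorm x ≤ vnorm y + σ vnorm z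
  have htri : vnorm x - σ * vnorm z ≤ vnorm y := by
    have h1 : Qstar.mulVec x = y + ((-σ) • z) := by
      rw [hy]; ext j; simp
    have h2 : vnorm (Qstar.mulVec x) ≤ vnorm y + vnorm ((-σ) • z) := by
      rw [h1]; exact vnorm_add_le _ _
    have h3 : vnorm ((-σ) • z) = σ * vnorm z := by
      have he : (-σ) • z = σ • (-z) := by ext j; simp
      have hn : vnorm (-z) = vnorm z := by simp [vnorm, sqnorm]
      rw [he, vnorm_smul σ hσ (-z), hn]
    rw [hQnorm, h3] at h2
    linarith
  -- conclude
  have hyc' : (1 - δ) * vnorm y ≤ ∑ j, u j * y j := hyc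
  have hgoal : (1 - (δ + 2 * σ * vnorm z / vnorm x)) * vnorm x
      = (1 - δ) * vnorm x - 2 * σ * vnorm z := by
    field_simp
    ring
  show (1 - (δ + 2 * σ * vnorm z / vnorm x)) * vnorm x ≤ ∑ j, (Qstarᵀ.mulVec u) j * x j
  rw [hgoal]
  have hvy : 0 ≤ vnorm y := vnorm_nonneg y
  nlinarith [mul_nonneg hσ hvz]

end PW
end

section
/- Let X, Y ∈ ℝ^{d×n}, let J = (1/n)𝟙𝟙ᵀ ∈ ℝ^{n×n}, and define G = 2( J Xᵀ X Xᵀ X − 2 Yᵀ Y J Xᵀ X + Yᵀ Y Yᵀ Y J ). Then for every n×n permutation matrix P: ⟨J Xᵀ X Xᵀ X, P⟩ = ⟨Xᵀ X Xᵀ X, J⟩ and ⟨Yᵀ Y Yᵀ Y J, P⟩ = ⟨Yᵀ Y Yᵀ Y, J⟩ (both independent of P), and consequently the set of permutation matrices minimizing P ↦ ⟨G, P⟩ coincides with the set of permutation matrices maximizing P ↦ ⟨Yᵀ Y J Xᵀ X, P⟩. -/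
open Matrix

namespace PW

/-- Trace (Frobenius) inner product `⟨A,B⟩ = Tr(Aᵀ B)`. -/
noncomputable def tip {m : ℕ} (A B : Matrix (Fin m) (Fin m) ℝ) : ℝ := (Aᵀ * B).trace

lemma ones_mul_perm (n : ℕ) (σ : Equiv.Perm (Fin n)) :
    (Matrix.of (fun _ _ => (1:ℝ)) : Matrix (Fin n) (Fin n) ℝ) * σ.permMatrix ℝ
      = Matrix.of (fun _ _ => (1:ℝ)) := by
  ext i j
  simp [Matrix.mul_apply, Equiv.Perm.permMatrix, PEquiv.toMatrix, Equiv.toPEquiv]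
  have : Finset.filter (fun x => σ x = j) Finset.univ = {σ.symm j} := by
    ext x; simp [← Equiv.eq_symm_apply]
  simp [this]

lemma perm_mul_ones (n : ℕ) (σ : Equiv.Perm (Fin n)) :
    σ.permMatrix ℝ * (Matrix.of (fun _ _ => (1:ℝ)) : Matrix (Fin n) (Fin n) ℝ)
      = Matrix.of (fun _ _ => (1:ℝ)) := by
  ext i j
  simp [Matrix.mul_apply, Equiv.Perm.permMatrix, PEquiv.toMatrix, Equiv.toPEquiv]

/-- with `J = (1/n)𝟙𝟙ᵀ` and
`G = 2(J Xᵀ X Xᵀ X − 2 Yᵀ Y J Xᵀ X + Yᵀ Y Yᵀ Y J)`, the inner products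
`⟨J Xᵀ X Xᵀ X, P⟩` and `⟨Yᵀ Y Yᵀ Y J, P⟩` do not depend on the permutation matrix `P`
(they equal `⟨Xᵀ X Xᵀ X, J⟩` and `⟨Yᵀ Y Yᵀ Y, J⟩` respectively), and the permutation
matrices minimizing `⟨G, P⟩` are exactly those maximizing `⟨Yᵀ Y J Xᵀ X, P⟩`. -/
theorem frank_wolfe_first_step (d n : ℕ) (hn : 1 ≤ n)
    (X Y : Matrix (Fin d) (Fin n) ℝ) :
    ∀ J G : Matrix (Fin n) (Fin n) ℝ,
      J = (n : ℝ)⁻¹ • Matrix.of (fun _ _ => (1 : ℝ)) →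
      G = (2 : ℝ) • (J * Xᵀ * X * Xᵀ * X - (2 : ℝ) • (Yᵀ * Y * J * Xᵀ * X)
            + Yᵀ * Y * Yᵀ * Y * J) →
      (∀ π : Equiv.Perm (Fin n),
        tip (J * Xᵀ * X * Xᵀ * X) (π.permMatrix ℝ) = tip (Xᵀ * X * Xᵀ * X) J ∧
        tip (Yᵀ * Y * Yᵀ * Y * J) (π.permMatrix ℝ) = tip (Yᵀ * Y * Yᵀ * Y) J) ∧
      {π : Equiv.Perm (Fin n) |
          ∀ π' : Equiv.Perm (Fin n), tip G (π.permMatrix ℝ) ≤ tip G (π'.permMatrix ℝ)}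
        = {π : Equiv.Perm (Fin n) |
          ∀ π' : Equiv.Perm (Fin n),
            tip (Yᵀ * Y * J * Xᵀ * X) (π'.permMatrix ℝ)
              ≤ tip (Yᵀ * Y * J * Xᵀ * X) (π.permMatrix ℝ)} := by
  intro J G hJ hG
  have hJP : ∀ σ : Equiv.Perm (Fin n), J * σ.permMatrix ℝ = J := by
    intro σ; rw [hJ, smul_mul_assoc, ones_mul_perm]
  have hPJ : ∀ σ : Equiv.Perm (Fin n), σ.permMatrix ℝ * J = J := by
    intro σ; rw [hJ, mul_smul_comm, perm_mul_ones]
  have hJT : Jᵀ = J := by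
    rw [hJ]; ext i j; simp
  have key1 : ∀ (M : Matrix (Fin n) (Fin n) ℝ) (σ : Equiv.Perm (Fin n)),
      tip (J * M) (σ.permMatrix ℝ) = tip M J := by
    intro M σ
    unfold tip
    rw [transpose_mul, hJT, mul_assoc, hJP]
  have key2 : ∀ (M : Matrix (Fin n) (Fin n) ℝ) (σ : Equiv.Perm (Fin n)),
      tip (M * J) (σ.permMatrix ℝ) = tip M J := by
    intro M σ
    unfold tip
    rw [transpose_mul, hJT, mul_assoc, Matrix.trace_mul_comm J, mul_assoc, hPJ,
      Matrix.trace_mul_comm, Matrix.trace_mul_comm J]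
  have hA : J * Xᵀ * X * Xᵀ * X = J * (Xᵀ * X * Xᵀ * X) := by
    simp only [Matrix.mul_assoc]
  have main : ∀ σ : Equiv.Perm (Fin n),
      tip (J * Xᵀ * X * Xᵀ * X) (σ.permMatrix ℝ) = tip (Xᵀ * X * Xᵀ * X) J ∧
      tip (Yᵀ * Y * Yᵀ * Y * J) (σ.permMatrix ℝ) = tip (Yᵀ * Y * Yᵀ * Y) J := by
    intro σ
    constructor
    · rw [hA, key1]
    · exact key2 (Yᵀ * Y * Yᵀ * Y) σ
  refine ⟨main, ?_⟩
  have expand : ∀ σ : Equiv.Perm (Fin n),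
      tip G (σ.permMatrix ℝ) =
        2 * (tip (Xᵀ * X * Xᵀ * X) J - 2 * tip (Yᵀ * Y * J * Xᵀ * X) (σ.permMatrix ℝ)
          + tip (Yᵀ * Y * Yᵀ * Y) J) := by
    intro σ
    have h1 := (main σ).1
    have h2 := (main σ).2
    rw [hG]
    unfold tip at *
    simp only [transpose_smul, transpose_add, transpose_sub, smul_mul_assoc, add_mul,
      sub_mul, trace_smul, trace_add, trace_sub, smul_eq_mul]
    rw [h1, h2]
  ext π
  simp only [Set.mem_setOf_eq]
  constructor
  · intro h π'
    have := h π'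
    rw [expand, expand] at this
    linarith
  · intro h π'
    have := h π'
    rw [expand, expand]
    linarith


end PW
end
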